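/- Let f : ℝ^{m×n} → ℝ be differentiable, bounded below by f_low ∈ ℝ, with ‖∇f(X) − ∇f(Y)‖_* ≤ L_* ‖X − Y‖ for all X, Y and some L_* > 0. Let η_k = δ_k = (k+1)^{−1/2} for k ≥ 0, and let sequences X^k, M_Q^k, M_O^k ∈ ℝ^{m×n} satisfy: ‖∇f(X^k) − M_Q^k‖_* ≤ δ_k, ‖M_O^k‖ ≤ 1, ⟨M_Q^k, M_O^k⟩ = ‖M_Q^k‖_* (as holds for M_O^k = msgn(M_Q^k)), and X^{k+1} = X^k − η_k M_O^k. Define U_gd = f(X^0) − f_low + L_* + 4. Then for every ε ∈ (0,1) and every integer K ≥ max{ ((4U_gd/ε) ln(4U_gd/ε))², 3 }, it holds that min_{0≤k≤K−1} ‖∇f(X^k)‖_* ≤ ε. -/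

import Mathlib

open Matrix MeasureTheory

/-- Trace inner product `⟨A,B⟩ = tr(AᵀB) = ∑ᵢⱼ Aᵢⱼ Bᵢⱼ`. -/
def dotp {m n : ℕ} (A B : Matrix (Fin m) (Fin n) ℝ) : ℝ :=
  ∑ i, ∑ j, A i j * B i j

/-- Frobenius norm `‖A‖_F = ⟨A,A⟩^{1/2}`. -/
noncomputable def frobNorm {m n : ℕ} (A : Matrix (Fin m) (Fin n) ℝ) : ℝ :=
  Real.sqrt (dotp A A)

/-- Spectral norm: the `ℓ²→ℓ²` operator norm. -/
noncomputable def specNorm {m n : ℕ} (A : Matrix (Fin m) (Fin n) ℝ) : ℝ :=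
  ‖LinearMap.toContinuousLinearMap (Matrix.toEuclideanLin A)‖

/-- Nuclear norm: the trace of `(AᵀA)^{1/2}`. -/
noncomputable def nucNorm {m n : ℕ} (A : Matrix (Fin m) (Fin n) ℝ) : ℝ :=
  (let hA := Matrix.posSemidef_conjTranspose_mul_self A
   (hA.1.eigenvectorUnitary : Matrix (Fin n) (Fin n) ℝ) * diagonal (Real.sqrt ∘ hA.1.eigenvalues) *
     star (hA.1.eigenvectorUnitary : Matrix (Fin n) (Fin n) ℝ)).trace

attribute [local instance] Matrix.frobeniusNormedAddCommGroup Matrix.frobeniusNormedSpace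

/-- The gradient of `f : ℝ^{m×n} → ℝ` at `X`, i.e. the matrix representing the
derivative of `f` at `X` with respect to the trace inner product. -/
noncomputable def grad {m n : ℕ} (f : Matrix (Fin m) (Fin n) ℝ → ℝ)
    (X : Matrix (Fin m) (Fin n) ℝ) : Matrix (Fin m) (Fin n) ℝ :=
  fun i j => fderiv ℝ f X (Matrix.single i j 1)

namespace StmtAux
variable {m n k : ℕ}
noncomputable def e2 {k : ℕ} (v : Fin k → ℝ) : EuclideanSpace ℝ (Fin k) :=
  (WithLp.equiv 2 (Fin k → ℝ)).symm v

lemma dot_eq_inner (v w : Fin k → ℝ) : v ⬝ᵥ w = inner ℝ (e2 v) (e2 w) := by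
  simp [PiLp.inner_apply, dotProduct, e2, mul_comm]

lemma e2_norm_sq (v : Fin k → ℝ) : ‖e2 v‖ ^ 2 = v ⬝ᵥ v := by
  rw [dot_eq_inner, real_inner_self_eq_norm_sq]

lemma e2_norm (v : Fin k → ℝ) : ‖e2 v‖ = Real.sqrt (v ⬝ᵥ v) := by
  rw [← e2_norm_sq, Real.sqrt_sq (norm_nonneg _)]

lemma abs_dot_le (v w : Fin k → ℝ) : |v ⬝ᵥ w| ≤ ‖e2 v‖ * ‖e2 w‖ := by
  rw [dot_eq_inner]; exact abs_real_inner_le_norm _ _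

lemma specNorm_nonneg (A : Matrix (Fin m) (Fin n) ℝ) : 0 ≤ specNorm A := norm_nonneg _

lemma e2_mulVec_le (B : Matrix (Fin m) (Fin n) ℝ) (v : Fin n → ℝ) :
    ‖e2 (B *ᵥ v)‖ ≤ specNorm B * ‖e2 v‖ := by
  have h : e2 (B *ᵥ v) = LinearMap.toContinuousLinearMap (Matrix.toEuclideanLin B) (e2 v) := by
    simp [e2, Matrix.toEuclideanLin_apply_piLp_toLp]
  rw [h]
  exact (LinearMap.toContinuousLinearMap (Matrix.toEuclideanLin B)).le_opNorm _

lemma specNorm_le_bound (B : Matrix (Fin m) (Fin n) ℝ) {c : ℝ} (hc : 0 ≤ c)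
    (h : ∀ v : Fin n → ℝ, ‖e2 (B *ᵥ v)‖ ≤ c * ‖e2 v‖) : specNorm B ≤ c := by
  refine ContinuousLinearMap.opNorm_le_bound _ hc fun x => ?_
  have := h ((WithLp.equiv 2 (Fin n → ℝ)) x)
  simpa [e2, Matrix.toEuclideanLin_apply] using this

lemma specNorm_smul (c : ℝ) (A : Matrix (Fin m) (Fin n) ℝ) :
    specNorm (c • A) = |c| * specNorm A := by
  unfold specNorm
  rw [_root_.map_smul, _root_.map_smul]
  rw [show |c| = ‖c‖ from (Real.norm_eq_abs c).symm]
  exact norm_smul c (LinearMap.toContinuousLinearMap (Matrix.toEuclideanLin A))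

/- ## dotp basics -/
lemma dotp_eq_trace (A B : Matrix (Fin m) (Fin n) ℝ) : dotp A B = (Aᴴ * B).trace := by
  simp [dotp, Matrix.trace, Matrix.diag, Matrix.mul_apply, conjTranspose_apply]
  rw [Finset.sum_comm]

lemma dotp_add_right (A B C : Matrix (Fin m) (Fin n) ℝ) :
    dotp A (B + C) = dotp A B + dotp A C := by
  simp [dotp, mul_add, Finset.sum_add_distrib]

lemma dotp_sub_left (A B C : Matrix (Fin m) (Fin n) ℝ) :
    dotp (A - B) C = dotp A C - dotp B C := by
  simp [dotp, sub_mul, Finset.sum_sub_distrib]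

lemma dotp_smul_right (c : ℝ) (A B : Matrix (Fin m) (Fin n) ℝ) :
    dotp A (c • B) = c * dotp A B := by
  simp only [dotp, Matrix.smul_apply, smul_eq_mul, Finset.mul_sum]
  exact Finset.sum_congr rfl fun i _ => Finset.sum_congr rfl fun j _ => by ring

/- ## eigen data for H = Aᴴ A -/
noncomputable def lam (A : Matrix (Fin m) (Fin n) ℝ) : Fin n → ℝ :=
  (Matrix.posSemidef_conjTranspose_mul_self A).1.eigenvalues

noncomputable def evec (A : Matrix (Fin m) (Fin n) ℝ) (j : Fin n) : Fin n → ℝ :=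
  ⇑((Matrix.posSemidef_conjTranspose_mul_self A).1.eigenvectorBasis j)

lemma lam_nonneg (A : Matrix (Fin m) (Fin n) ℝ) (j : Fin n) : 0 ≤ lam A j :=
  (Matrix.posSemidef_conjTranspose_mul_self A).eigenvalues_nonneg j

lemma nucNorm_eq_sum (A : Matrix (Fin m) (Fin n) ℝ) :
    nucNorm A = ∑ j, Real.sqrt (lam A j) := by
  set hH := Matrix.posSemidef_conjTranspose_mul_self A
  have : nucNorm A = (hH.1.eigenvectorUnitary.1 *
      Matrix.diagonal (Real.sqrt ∘ hH.1.eigenvalues) *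
      star (hH.1.eigenvectorUnitary : Matrix (Fin n) (Fin n) ℝ)).trace := rfl
  rw [this, Matrix.trace_mul_cycle]
  rw [show (star (hH.1.eigenvectorUnitary : Matrix (Fin n) (Fin n) ℝ) * hH.1.eigenvectorUnitary.1)
      = 1 from Unitary.coe_star_mul_self _, one_mul, Matrix.trace_diagonal]
  simp [lam, RCLike.ofReal]

lemma nucNorm_nonneg (A : Matrix (Fin m) (Fin n) ℝ) : 0 ≤ nucNorm A := by
  rw [nucNorm_eq_sum]
  exact Finset.sum_nonneg fun j _ => Real.sqrt_nonneg _

lemma mulVec_dot_mulVec (A B : Matrix (Fin m) (Fin n) ℝ) (u : Fin n → ℝ) :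
    (A *ᵥ u) ⬝ᵥ (B *ᵥ u) = u ⬝ᵥ ((Aᴴ * B) *ᵥ u) := by
  conv_rhs => rw [Matrix.conjTranspose_eq_transpose_of_trivial, ← Matrix.mulVec_mulVec,
    Matrix.dotProduct_mulVec, Matrix.vecMul_transpose]

lemma evec_dot_self (A : Matrix (Fin m) (Fin n) ℝ) (j : Fin n) :
    evec A j ⬝ᵥ evec A j = 1 := by
  set b := (Matrix.posSemidef_conjTranspose_mul_self A).1.eigenvectorBasis
  have h := b.orthonormal.1 j
  have h2 : (inner ℝ (b j) (b j) : ℝ) = 1 := by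
    rw [real_inner_self_eq_norm_sq, h]; norm_num
  rw [← h2, dot_eq_inner]
  rfl

lemma e2_evec_norm (A : Matrix (Fin m) (Fin n) ℝ) (j : Fin n) : ‖e2 (evec A j)‖ = 1 := by
  rw [e2_norm, evec_dot_self, Real.sqrt_one]

lemma A_mulVec_evec_sq (A : Matrix (Fin m) (Fin n) ℝ) (j : Fin n) :
    (A *ᵥ evec A j) ⬝ᵥ (A *ᵥ evec A j) = lam A j := by
  rw [mulVec_dot_mulVec]
  rw [show (Aᴴ * A) *ᵥ evec A j = lam A j • evec A j from
    (Matrix.posSemidef_conjTranspose_mul_self A).1.mulVec_eigenvectorBasis j]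
  rw [dotProduct_smul, evec_dot_self]
  simp

lemma e2_A_evec (A : Matrix (Fin m) (Fin n) ℝ) (j : Fin n) :
    ‖e2 (A *ᵥ evec A j)‖ = Real.sqrt (lam A j) := by
  rw [e2_norm, A_mulVec_evec_sq]

lemma trace_eq_sum_dot (M : Matrix (Fin n) (Fin n) ℝ) (V : Matrix.unitaryGroup (Fin n) ℝ) :
    M.trace = ∑ j, (fun i => (V : Matrix (Fin n) (Fin n) ℝ) i j) ⬝ᵥ
      (M *ᵥ fun i => (V : Matrix (Fin n) (Fin n) ℝ) i j) := by
  have h1 : ((V : Matrix (Fin n) (Fin n) ℝ) * (star V : Matrix (Fin n) (Fin n) ℝ)) = 1 :=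
    Unitary.coe_mul_star_self _
  calc M.trace = (M * ((V : Matrix (Fin n) (Fin n) ℝ) * (star V : Matrix (Fin n) (Fin n) ℝ))).trace := by
        rw [h1, mul_one]
    _ = ((star V : Matrix (Fin n) (Fin n) ℝ) * M * (V : Matrix (Fin n) (Fin n) ℝ)).trace := by
        rw [← Matrix.mul_assoc, Matrix.trace_mul_cycle]
    _ = _ := by
        simp only [Matrix.trace, Matrix.diag, Matrix.mul_apply, dotProduct, Matrix.mulVec,
          Matrix.star_apply, star_trivial, Matrix.conjTranspose_apply,
          Finset.sum_mul, Finset.mul_sum]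
        refine Finset.sum_congr rfl fun x _ => ?_
        rw [Finset.sum_comm]
        exact Finset.sum_congr rfl fun a _ => Finset.sum_congr rfl fun b _ => by ring

lemma dotp_eq_sum_dot (A B : Matrix (Fin m) (Fin n) ℝ) :
    dotp A B = ∑ j, (A *ᵥ evec A j) ⬝ᵥ (B *ᵥ evec A j) := by
  rw [dotp_eq_trace,
    trace_eq_sum_dot (Aᴴ * B) (Matrix.posSemidef_conjTranspose_mul_self A).1.eigenvectorUnitary]
  refine Finset.sum_congr rfl fun j _ => ?_
  rw [mulVec_dot_mulVec]
  congr 1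

/-- Duality: `|⟨A,B⟩| ≤ ‖A‖_* ‖B‖`. -/
lemma abs_dotp_le (A B : Matrix (Fin m) (Fin n) ℝ) :
    |dotp A B| ≤ nucNorm A * specNorm B := by
  rw [dotp_eq_sum_dot, nucNorm_eq_sum, Finset.sum_mul]
  refine (Finset.abs_sum_le_sum_abs _ _).trans (Finset.sum_le_sum fun j _ => ?_)
  refine (abs_dot_le _ _).trans ?_
  rw [e2_A_evec]
  have h1 : ‖e2 (B *ᵥ evec A j)‖ ≤ specNorm B := by
    have := e2_mulVec_le B (evec A j)
    rwa [e2_evec_norm, mul_one] at this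
  exact mul_le_mul_of_nonneg_left h1 (Real.sqrt_nonneg _)

lemma spec_thm (A : Matrix (Fin m) (Fin n) ℝ) :
    Aᴴ * A = ((Matrix.posSemidef_conjTranspose_mul_self A).1.eigenvectorUnitary :
        Matrix (Fin n) (Fin n) ℝ) * Matrix.diagonal (lam A) *
      ((Matrix.posSemidef_conjTranspose_mul_self A).1.eigenvectorUnitary :
        Matrix (Fin n) (Fin n) ℝ)ᴴ := by
  have h := (Matrix.posSemidef_conjTranspose_mul_self A).1.spectral_theorem
  rw [Unitary.conjStarAlgAut_apply] at h
  rw [← Matrix.star_eq_conjTranspose]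
  exact h

/-- Attainment of the nuclear norm in the duality. -/
lemma exists_dual (A : Matrix (Fin m) (Fin n) ℝ) :
    ∃ W : Matrix (Fin m) (Fin n) ℝ, specNorm W ≤ 1 ∧ dotp A W = nucNorm A := by
  classical
  set V : Matrix (Fin n) (Fin n) ℝ :=
    ((Matrix.posSemidef_conjTranspose_mul_self A).1.eigenvectorUnitary :
      Matrix (Fin n) (Fin n) ℝ) with hV
  have hVV : V * Vᴴ = 1 := by
    rw [← Matrix.star_eq_conjTranspose]
    exact Unitary.coe_mul_star_self _
  have hsVV : Vᴴ * V = 1 := by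
    rw [← Matrix.star_eq_conjTranspose]
    exact Unitary.coe_star_mul_self _
  set g : Fin n → ℝ := fun j => if lam A j = 0 then 0 else (Real.sqrt (lam A j))⁻¹ with hg
  set C : Matrix (Fin n) (Fin n) ℝ := V * Matrix.diagonal g * Vᴴ with hC
  have hCH : Cᴴ = C := by
    rw [hC]
    simp only [Matrix.conjTranspose_mul, Matrix.conjTranspose_conjTranspose,
      Matrix.diagonal_conjTranspose]
    rw [show star g = g from funext fun j => star_trivial _, Matrix.mul_assoc]
  have sandwich : ∀ d : Fin n → ℝ, C * (V * Matrix.diagonal d * Vᴴ) =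
      V * (Matrix.diagonal (fun j => g j * d j)) * Vᴴ := by
    intro d
    rw [hC]
    calc V * Matrix.diagonal g * Vᴴ * (V * Matrix.diagonal d * Vᴴ)
        = V * Matrix.diagonal g * (Vᴴ * V) * (Matrix.diagonal d * Vᴴ) := by
          simp only [Matrix.mul_assoc]
      _ = V * (Matrix.diagonal g * Matrix.diagonal d) * Vᴴ := by
          rw [hsVV]; simp only [Matrix.mul_one, Matrix.mul_assoc]
      _ = _ := by rw [Matrix.diagonal_mul_diagonal]
  have hWW : (A * C)ᴴ * (A * C) =
      V * Matrix.diagonal (fun j => g j * (lam A j * g j)) * Vᴴ := by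
    have h1 : (A * C)ᴴ * (A * C) = Cᴴ * ((Aᴴ * A) * C) := by
      simp only [Matrix.conjTranspose_mul, Matrix.mul_assoc]
    rw [h1, hCH, spec_thm A, ← hV]
    have h2 : V * Matrix.diagonal (lam A) * Vᴴ * C =
        V * Matrix.diagonal (fun j => lam A j * g j) * Vᴴ := by
      rw [hC]
      calc V * Matrix.diagonal (lam A) * Vᴴ * (V * Matrix.diagonal g * Vᴴ)
          = V * Matrix.diagonal (lam A) * (Vᴴ * V) * (Matrix.diagonal g * Vᴴ) := by
            simp only [Matrix.mul_assoc]
        _ = V * (Matrix.diagonal (lam A) * Matrix.diagonal g) * Vᴴ := by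
            rw [hsVV]; simp only [Matrix.mul_one, Matrix.mul_assoc]
        _ = _ := by rw [Matrix.diagonal_mul_diagonal]
    rw [h2, sandwich]
  have hp : ∀ j, g j * (lam A j * g j) ≤ 1 := by
    intro j
    by_cases h : lam A j = 0
    · simp [hg, h]
    · have hlt : 0 < lam A j := lt_of_le_of_ne (lam_nonneg A j) (Ne.symm h)
      have hs : Real.sqrt (lam A j) * Real.sqrt (lam A j) = lam A j :=
        Real.mul_self_sqrt (le_of_lt hlt)
      have hsne : Real.sqrt (lam A j) ≠ 0 := by positivity
      simp only [hg, if_neg h]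
      rw [show (Real.sqrt (lam A j))⁻¹ * (lam A j * (Real.sqrt (lam A j))⁻¹)
          = lam A j / (Real.sqrt (lam A j) * Real.sqrt (lam A j)) by field_simp
          ]
      rw [hs, div_self h]
  refine ⟨A * C, ?_, ?_⟩
  · -- spectral norm ≤ 1
    refine specNorm_le_bound _ zero_le_one fun v => ?_
    rw [one_mul, e2_norm, e2_norm]
    apply Real.sqrt_le_sqrt
    rw [mulVec_dot_mulVec, hWW]
    have hz : ∀ w : Fin n → ℝ, v ⬝ᵥ (V *ᵥ w) = (Vᴴ *ᵥ v) ⬝ᵥ w := by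
      intro w
      rw [Matrix.dotProduct_mulVec, Matrix.conjTranspose_eq_transpose_of_trivial,
        Matrix.mulVec_transpose]
    rw [← Matrix.mulVec_mulVec, ← Matrix.mulVec_mulVec, hz]
    set z : Fin n → ℝ := Vᴴ *ᵥ v with hzdef
    have hdiag : z ⬝ᵥ (Matrix.diagonal (fun j => g j * (lam A j * g j)) *ᵥ z)
        = ∑ j, (g j * (lam A j * g j)) * (z j * z j) := by
      simp only [dotProduct, Matrix.mulVec_diagonal]
      exact Finset.sum_congr rfl fun j _ => by ring
    rw [hdiag]
    have hzz : z ⬝ᵥ z = v ⬝ᵥ v := by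
      rw [hzdef, mulVec_dot_mulVec, Matrix.conjTranspose_conjTranspose, hVV]
      simp
    calc ∑ j, (g j * (lam A j * g j)) * (z j * z j)
        ≤ ∑ j, z j * z j := by
          refine Finset.sum_le_sum fun j _ => ?_
          have := mul_self_nonneg (z j)
          nlinarith [hp j]
      _ = z ⬝ᵥ z := by simp [dotProduct]
      _ = v ⬝ᵥ v := hzz
  · -- value
    rw [dotp_eq_trace, ← Matrix.mul_assoc, ← Matrix.mul_assoc, Matrix.mul_assoc, spec_thm A, ← hV]
    have h2 : V * Matrix.diagonal (lam A) * Vᴴ * (V * Matrix.diagonal g * Vᴴ)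
        = V * Matrix.diagonal (fun j => lam A j * g j) * Vᴴ := by
      calc V * Matrix.diagonal (lam A) * Vᴴ * (V * Matrix.diagonal g * Vᴴ)
          = V * Matrix.diagonal (lam A) * (Vᴴ * V) * (Matrix.diagonal g * Vᴴ) := by
            simp only [Matrix.mul_assoc]
        _ = V * (Matrix.diagonal (lam A) * Matrix.diagonal g) * Vᴴ := by
            rw [hsVV]; simp only [Matrix.mul_one, Matrix.mul_assoc]
        _ = _ := by rw [Matrix.diagonal_mul_diagonal]
    rw [h2, Matrix.trace_mul_cycle, hsVV, one_mul, Matrix.trace_diagonal, nucNorm_eq_sum]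
    refine Finset.sum_congr rfl fun j _ => ?_
    by_cases h : lam A j = 0
    · simp [hg, h]
    · have hlt : 0 < lam A j := lt_of_le_of_ne (lam_nonneg A j) (Ne.symm h)
      have hs : Real.sqrt (lam A j) * Real.sqrt (lam A j) = lam A j :=
        Real.mul_self_sqrt (le_of_lt hlt)
      have hsne : Real.sqrt (lam A j) ≠ 0 := by positivity
      simp only [hg, if_neg h]
      field_simp
      rw [Real.sq_sqrt hlt.le]
lemma fderiv_apply_eq (f : Matrix (Fin m) (Fin n) ℝ → ℝ) (X H : Matrix (Fin m) (Fin n) ℝ) :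
    fderiv ℝ f X H = dotp (grad f X) H := by
  conv_lhs => rw [Matrix.matrix_eq_sum_single H]
  rw [map_sum]
  rw [show dotp (grad f X) H = ∑ i, ∑ j, (grad f X) i j * H i j from rfl]
  refine Finset.sum_congr rfl fun i _ => ?_
  rw [map_sum]
  refine Finset.sum_congr rfl fun j _ => ?_
  have h1 : Matrix.single i j (H i j) = H i j • Matrix.single i j 1 := by
    rw [Matrix.smul_single, smul_eq_mul, mul_one]
  rw [h1, _root_.map_smul, smul_eq_mul, grad, mul_comm]

lemma descent (f : Matrix (Fin m) (Fin n) ℝ → ℝ) (hf : Differentiable ℝ f) {Lstar : ℝ} (hL : 0 ≤ Lstar)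
    (hlip : ∀ X Y, nucNorm (grad f X - grad f Y) ≤ Lstar * specNorm (X - Y))
    (X D : Matrix (Fin m) (Fin n) ℝ) :
    f (X + D) ≤ f X + dotp (grad f X) D + Lstar * specNorm D ^ 2 := by
  set c := dotp (grad f X) D with hc
  set h : ℝ → ℝ := fun t => f (X + t • D) - t * c with hh
  set h' : ℝ → ℝ := fun t => dotp (grad f (X + t • D)) D - c with hh'
  have hderiv : ∀ t : ℝ, HasDerivAt h (h' t) t := by
    intro t
    have hγ : HasDerivAt (fun t : ℝ => X + t • D) D t := by
      have := ((hasDerivAt_id t).smul_const D).const_add X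
      rwa [one_smul] at this
    have hcomp : HasDerivAt (fun t : ℝ => f (X + t • D)) (fderiv ℝ f (X + t • D) D) t :=
      (hf _).hasFDerivAt.comp_hasDerivAt t hγ
    rw [fderiv_apply_eq] at hcomp
    have := hcomp.sub ((hasDerivAt_id t).mul_const c)
    simp only [id_eq, one_mul] at this
    exact this
  have hbound : ∀ t ∈ Set.Ico (0:ℝ) 1, ‖h' t‖ ≤ Lstar * specNorm D ^ 2 := by
    intro t ht
    have h1 : h' t = dotp (grad f (X + t • D) - grad f X) D := by
      rw [dotp_sub_left, hh', hc]
    rw [Real.norm_eq_abs, h1]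
    refine (abs_dotp_le _ _).trans ?_
    have h2 : nucNorm (grad f (X + t • D) - grad f X) ≤ Lstar * (t * specNorm D) := by
      have := hlip (X + t • D) X
      rw [show X + t • D - X = t • D by abel, specNorm_smul, abs_of_nonneg ht.1] at this
      linarith [this]
    have hD := specNorm_nonneg D
    have hnuc : (0:ℝ) ≤ nucNorm (grad f (X + t • D) - grad f X) := nucNorm_nonneg _
    nlinarith [ht.1, ht.2, hD, hL, mul_le_mul_of_nonneg_right h2 hD,
      mul_nonneg (mul_nonneg hL hD) hD]
  have key := norm_image_sub_le_of_norm_deriv_le_segment'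
    (f := h) (f' := h') (C := Lstar * specNorm D ^ 2) (a := 0) (b := 1)
    (fun x _ => (hderiv x).hasDerivWithinAt) hbound 1 (by norm_num)
  simp only [hh] at key
  rw [Real.norm_eq_abs] at key
  have := abs_le.1 key
  have h0 : (0:ℝ) • D = 0 := by simp
  simp only [one_smul, zero_smul, add_zero, zero_mul, sub_zero, one_mul, mul_one] at this
  linarith [this.2]
lemma sum_inv_sqrt_ge (K : ℕ) :
    Real.sqrt K ≤ ∑ k ∈ Finset.range K, (Real.sqrt ((k : ℝ) + 1))⁻¹ := by
  induction K with
  | zero => simp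
  | succ K ih =>
      rw [Finset.sum_range_succ]
      have hb : (0:ℝ) < Real.sqrt ((K : ℝ) + 1) := Real.sqrt_pos.2 (by positivity)
      have hab : (K : ℝ) ≤ Real.sqrt K * Real.sqrt ((K:ℝ) + 1) := by
        rw [← Real.sqrt_mul (by positivity)]
        calc (K:ℝ) = Real.sqrt ((K:ℝ)^2) := (Real.sqrt_sq (by positivity)).symm
          _ ≤ _ := Real.sqrt_le_sqrt (by nlinarith [Nat.cast_nonneg (α := ℝ) K])
      have key : Real.sqrt ((K:ℝ) + 1) - Real.sqrt K ≤ (Real.sqrt ((K : ℝ) + 1))⁻¹ := by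
        have hb2 : Real.sqrt ((K:ℝ)+1) ^ 2 = (K:ℝ) + 1 := Real.sq_sqrt (by positivity)
        have hmul : (Real.sqrt ((K:ℝ)+1) - Real.sqrt K) * Real.sqrt ((K:ℝ)+1) ≤ 1 := by
          nlinarith
        have := (le_div_iff₀ hb).mpr hmul
        simpa [one_div] using this
      have hcast : ((K + 1 : ℕ) : ℝ) = (K : ℝ) + 1 := by push_cast; ring
      rw [hcast]
      linarith [ih]

lemma sum_inv_le (K : ℕ) (hK : 1 ≤ K) :
    ∑ k ∈ Finset.range K, ((k : ℝ) + 1)⁻¹ ≤ 1 + Real.log K := by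
  induction K with
  | zero => omega
  | succ K ih =>
      rcases Nat.eq_or_lt_of_le hK with h1 | h2
      · simp [← h1]
      · have hK1 : 1 ≤ K := by omega
        have hKpos : (0:ℝ) < K := by positivity
        rw [Finset.sum_range_succ]
        have hlog : Real.log K + ((K:ℝ) + 1)⁻¹ ≤ Real.log ((K:ℝ)+1) := by
          have hx : (0:ℝ) < (K:ℝ) / ((K:ℝ)+1) := by positivity
          have := Real.log_le_sub_one_of_pos hx
          rw [Real.log_div (ne_of_gt hKpos) (by positivity)] at this
          have harith : (K:ℝ) / ((K:ℝ)+1) - 1 = -(((K:ℝ)+1)⁻¹) := by field_simp; ring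
          rw [harith] at this
          linarith
        have hcast : ((K + 1 : ℕ) : ℝ) = (K : ℝ) + 1 := by push_cast; ring
        rw [hcast]
        linarith [ih hK1]

lemma numeric_core {U ε Kr : ℝ} (hU : 4 ≤ U) (hε : 0 < ε) (hε1 : ε ≤ 1)
    (hK : (4 * U / ε * Real.log (4 * U / ε)) ^ 2 ≤ Kr) :
    U * (2 + Real.log Kr) ≤ ε * Real.sqrt Kr := by
  set T : ℝ := 4 * U / ε with hT
  have hT16 : 16 ≤ T := by
    rw [hT, le_div_iff₀ hε]
    nlinarith
  have hTpos : 0 < T := by linarith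
  have hlogT : 1 ≤ Real.log T := by
    rw [Real.le_log_iff_exp_le hTpos]
    have := Real.exp_one_lt_d9
    linarith
  have hlogTpos : 0 < Real.log T := by linarith
  set S0 : ℝ := T * Real.log T with hS0
  have hS0pos : 0 < S0 := mul_pos hTpos hlogTpos
  have hS01 : 1 ≤ S0 := by nlinarith
  set S : ℝ := Real.sqrt Kr with hS
  have hSS0 : S0 ≤ S := by
    rw [hS]
    calc S0 = Real.sqrt (S0 ^ 2) := (Real.sqrt_sq hS0pos.le).symm
      _ ≤ _ := Real.sqrt_le_sqrt (by rw [hS0]; exact hK)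
  have hSpos : 0 < S := lt_of_lt_of_le hS0pos hSS0
  have hKr0 : 0 ≤ Kr := le_trans (sq_nonneg _) hK
  have hlogKr : Real.log Kr = 2 * Real.log S := by
    conv_lhs => rw [show Kr = S ^ 2 from (Real.sq_sqrt hKr0).symm]
    rw [Real.log_pow]
    push_cast; ring
  have hlogS0 : 0 ≤ Real.log S0 := Real.log_nonneg hS01
  -- step 1 : φ(S0) ≤ ε, multiplied out: U * (2 + 2 log S0) ≤ ε * S0
  have hεT : ε * T = 4 * U := by rw [hT]; field_simp
  have hloglog : Real.log (Real.log T) ≤ Real.log T - 1 :=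
    Real.log_le_sub_one_of_pos hlogTpos
  have hlogS0eq : Real.log S0 = Real.log T + Real.log (Real.log T) := by
    rw [hS0, Real.log_mul (ne_of_gt hTpos) (ne_of_gt hlogTpos)]
  have step1 : U * (2 + 2 * Real.log S0) ≤ ε * S0 := by
    have : ε * S0 = 4 * U * Real.log T := by rw [hS0, ← mul_assoc, hεT]
    rw [this, hlogS0eq]
    nlinarith
  -- step 2 : monotonicity
  have hlogmono : Real.log S ≤ Real.log S0 + (S - S0) / S0 := by
    have hx : (0:ℝ) < S / S0 := by positivity
    have := Real.log_le_sub_one_of_pos hx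
    rw [Real.log_div (ne_of_gt hSpos) (ne_of_gt hS0pos)] at this
    have harith : S / S0 - 1 = (S - S0) / S0 := by field_simp
    rw [harith] at this
    linarith
  have step2 : U * (2 + 2 * Real.log S) * S0 ≤ U * (2 + 2 * Real.log S0) * S := by
    have hdiv : (S - S0) / S0 * S0 = S - S0 := by field_simp
    have h1 : U * (2 + 2 * Real.log S) * S0 ≤
        U * (2 + 2 * Real.log S0) * S0 + 2 * U * (S - S0) := by
      have := mul_le_mul_of_nonneg_left hlogmono (by linarith : (0:ℝ) ≤ 2 * U)
      nlinarith [hS0pos, hdiv]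
    have h2 : U * (2 + 2 * Real.log S0) * S0 + 2 * U * (S - S0) ≤
        U * (2 + 2 * Real.log S0) * S := by
      nlinarith [mul_nonneg (mul_nonneg (by linarith : (0:ℝ) ≤ U) (sub_nonneg.2 hSS0)) hlogS0]
    linarith
  -- combine
  have chain : U * (2 + 2 * Real.log S) * S0 ≤ ε * S * S0 := by
    calc U * (2 + 2 * Real.log S) * S0 ≤ U * (2 + 2 * Real.log S0) * S := step2
      _ ≤ ε * S0 * S := mul_le_mul_of_nonneg_right step1 hSpos.le
      _ = ε * S * S0 := by ring
  have := le_of_mul_le_mul_right (by linarith [chain] : U * (2 + 2 * Real.log S) * S0 ≤ ε * S * S0) hS0pos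
  rw [hlogKr]
  linarith

end StmtAux

/-- Iteration complexity of safeguarded low-rank matrix-signed gradient
descent: with `η_k = δ_k = (k+1)^{−1/2}`, `‖∇f(X^k) − M_Q^k‖_* ≤ δ_k`, `‖M_O^k‖ ≤ 1`,
`⟨M_Q^k, M_O^k⟩ = ‖M_Q^k‖_*`, `X^{k+1} = X^k − η_k M_O^k`, and
`U_gd = f(X⁰) − f_low + L_* + 4`, for every `ε ∈ (0,1)` and every integer
`K ≥ max{((4U_gd/ε) ln(4U_gd/ε))², 3}` one has `min_{0≤k≤K−1} ‖∇f(X^k)‖_* ≤ ε`. -/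
theorem stmt_12 {m n : ℕ} (f : Matrix (Fin m) (Fin n) ℝ → ℝ) (flow Lstar : ℝ)
    (hL : 0 < Lstar) (hf : Differentiable ℝ f) (hbdd : ∀ X, flow ≤ f X)
    (hlip : ∀ X Y, nucNorm (grad f X - grad f Y) ≤ Lstar * specNorm (X - Y))
    (η δ : ℕ → ℝ)
    (hη : ∀ k : ℕ, η k = ((k : ℝ) + 1) ^ (-(1/2 : ℝ)))
    (hδ : ∀ k : ℕ, δ k = ((k : ℝ) + 1) ^ (-(1/2 : ℝ)))
    (X MQ MO : ℕ → Matrix (Fin m) (Fin n) ℝ)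
    (herr : ∀ k, nucNorm (grad f (X k) - MQ k) ≤ δ k)
    (hMO : ∀ k, specNorm (MO k) ≤ 1 ∧ dotp (MQ k) (MO k) = nucNorm (MQ k))
    (hX : ∀ k, X (k + 1) = X k - η k • MO k)
    (Ugd : ℝ) (hUgd : Ugd = f (X 0) - flow + Lstar + 4)
    (ε : ℝ) (hε : ε ∈ Set.Ioo (0:ℝ) 1)
    (K : ℕ) (hK3 : 3 ≤ K)
    (hK : ((4 * Ugd / ε) * Real.log (4 * Ugd / ε)) ^ 2 ≤ (K : ℝ)) :
    (Finset.range K).inf' (Finset.nonempty_range_iff.mpr (by omega))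
        (fun k => nucNorm (grad f (X k))) ≤ ε := by
  obtain ⟨hε0, hε1⟩ := hε
  have hLnn : 0 ≤ Lstar := hL.le
  have hηpos : ∀ k, 0 < η k := fun k => by rw [hη]; positivity
  have hδη : ∀ k : ℕ, δ k = η k := fun k => by rw [hη, hδ]
  -- per-step descent inequality
  have hstep : ∀ k, f (X (k+1)) ≤ f (X k) - η k * nucNorm (grad f (X k))
      + 2 * (η k * δ k) + Lstar * (η k * η k) := by
    intro k
    have hMO1 := (hMO k).1
    have hMO2 := (hMO k).2
    have hδpos : 0 < δ k := by rw [hδη]; exact hηpos k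
    have herrdot : |dotp (grad f (X k) - MQ k) (MO k)| ≤ δ k := by
      refine (StmtAux.abs_dotp_le _ _).trans ?_
      have := mul_le_mul (herr k) hMO1 (StmtAux.specNorm_nonneg (MO k)) hδpos.le
      linarith
    have hnucle : nucNorm (grad f (X k)) ≤ nucNorm (MQ k) + δ k := by
      obtain ⟨W, hW1, hW2⟩ := StmtAux.exists_dual (grad f (X k))
      have hsplit : dotp (grad f (X k)) W = dotp (MQ k) W + dotp (grad f (X k) - MQ k) W := by
        rw [StmtAux.dotp_sub_left]; ring
      have hMQW : |dotp (MQ k) W| ≤ nucNorm (MQ k) := by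
        refine (StmtAux.abs_dotp_le _ _).trans ?_
        have := mul_le_mul_of_nonneg_left hW1 (StmtAux.nucNorm_nonneg (MQ k))
        linarith
      have herrW : |dotp (grad f (X k) - MQ k) W| ≤ δ k := by
        refine (StmtAux.abs_dotp_le _ _).trans ?_
        have := mul_le_mul (herr k) hW1 (StmtAux.specNorm_nonneg W) hδpos.le
        linarith
      rw [← hW2, hsplit]
      linarith [(abs_le.1 hMQW).2, (abs_le.1 herrW).2]
    have hgradMO : nucNorm (grad f (X k)) - 2 * δ k ≤ dotp (grad f (X k)) (MO k) := by
      have hsplit : dotp (grad f (X k)) (MO k)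
          = dotp (MQ k) (MO k) + dotp (grad f (X k) - MQ k) (MO k) := by
        rw [StmtAux.dotp_sub_left]; ring
      rw [hsplit, hMO2]
      linarith [(abs_le.1 herrdot).1]
    have hD := StmtAux.descent f hf hLnn hlip (X k) (-(η k • MO k))
    have hXk : X (k+1) = X k + -(η k • MO k) := by rw [hX k, sub_eq_add_neg]
    rw [hXk]
    have hsmul : -(η k • MO k) = (-(η k)) • MO k := by rw [neg_smul]
    have hspecD : specNorm (-(η k • MO k)) ≤ η k := by
      rw [hsmul, StmtAux.specNorm_smul, abs_neg, abs_of_pos (hηpos k)]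
      have := mul_le_mul_of_nonneg_left hMO1 (hηpos k).le
      linarith
    have hdotD : dotp (grad f (X k)) (-(η k • MO k))
        = -(η k) * dotp (grad f (X k)) (MO k) := by
      rw [hsmul, StmtAux.dotp_smul_right]
    have hspecsq : specNorm (-(η k • MO k)) ^ 2 ≤ η k * η k := by
      rw [sq]
      exact mul_self_le_mul_self (StmtAux.specNorm_nonneg _) hspecD
    have h1 : η k * (nucNorm (grad f (X k)) - 2 * δ k) ≤ η k * dotp (grad f (X k)) (MO k) :=
      mul_le_mul_of_nonneg_left hgradMO (hηpos k).le
    have h2 : Lstar * specNorm (-(η k • MO k)) ^ 2 ≤ Lstar * (η k * η k) :=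
      mul_le_mul_of_nonneg_left hspecsq hLnn
    rw [hdotD] at hD
    linarith [hD, h1, h2]
  -- telescoping
  have htel : ∀ K' : ℕ, ∑ k ∈ Finset.range K', η k * nucNorm (grad f (X k))
      ≤ f (X 0) - f (X K')
        + ∑ k ∈ Finset.range K', (2 * (η k * δ k) + Lstar * (η k * η k)) := by
    intro K'
    induction K' with
    | zero => simp
    | succ K' ih =>
        rw [Finset.sum_range_succ, Finset.sum_range_succ]
        have := hstep K'
        linarith
  -- the min value
  have hne : (Finset.range K).Nonempty := Finset.nonempty_range_iff.mpr (by omega)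
  obtain ⟨k0, hk0mem, hk0⟩ :=
    Finset.exists_mem_eq_inf' hne (fun k => nucNorm (grad f (X k)))
  set N : ℝ := (Finset.range K).inf' hne (fun k => nucNorm (grad f (X k))) with hNdef
  have hN0 : 0 ≤ N := by rw [hk0]; exact StmtAux.nucNorm_nonneg _
  have hNle : ∀ k ∈ Finset.range K, N ≤ nucNorm (grad f (X k)) :=
    fun k hk => Finset.inf'_le _ hk
  -- sum lower bound
  have hsumlow : N * ∑ k ∈ Finset.range K, η k
      ≤ ∑ k ∈ Finset.range K, η k * nucNorm (grad f (X k)) := by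
    rw [Finset.mul_sum]
    refine Finset.sum_le_sum fun k hk => ?_
    rw [mul_comm N (η k)]
    exact mul_le_mul_of_nonneg_left (hNle k hk) (hηpos k).le
  -- η in sqrt form
  have hηe : ∀ k : ℕ, η k = (Real.sqrt ((k:ℝ)+1))⁻¹ := by
    intro k
    rw [hη, Real.rpow_neg (by positivity), Real.sqrt_eq_rpow]
  have hηδe : ∀ k : ℕ, η k * δ k = ((k:ℝ)+1)⁻¹ := by
    intro k
    rw [hη, hδ, ← Real.rpow_add (by positivity),
      show (-(1/2 : ℝ)) + (-(1/2 : ℝ)) = -1 by norm_num, Real.rpow_neg_one]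
  have hsqK : Real.sqrt K ≤ ∑ k ∈ Finset.range K, η k := by
    rw [show ∑ k ∈ Finset.range K, η k = ∑ k ∈ Finset.range K, (Real.sqrt ((k:ℝ)+1))⁻¹
      from Finset.sum_congr rfl fun k _ => hηe k]
    exact StmtAux.sum_inv_sqrt_ge K
  have hharm : ∑ k ∈ Finset.range K, (2 * (η k * δ k) + Lstar * (η k * η k))
      = (2 + Lstar) * ∑ k ∈ Finset.range K, ((k:ℝ)+1)⁻¹ := by
    rw [Finset.mul_sum]
    refine Finset.sum_congr rfl fun k _ => ?_
    rw [show η k * η k = η k * δ k by rw [hδη], hηδe k]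
    ring
  have hharmle : ∑ k ∈ Finset.range K, ((k:ℝ)+1)⁻¹ ≤ 1 + Real.log K :=
    StmtAux.sum_inv_le K (by omega)
  have hlogK0 : 0 ≤ Real.log K := Real.log_nonneg (by exact_mod_cast Nat.one_le_cast.mpr (by omega))
  -- combine
  have hc0 : 0 ≤ f (X 0) - flow := by linarith [hbdd (X 0)]
  have hU4 : 4 ≤ Ugd := by rw [hUgd]; linarith
  have hchain : N * Real.sqrt K ≤ Ugd * (2 + Real.log K) := by
    have h1 : N * Real.sqrt K ≤ N * ∑ k ∈ Finset.range K, η k :=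
      mul_le_mul_of_nonneg_left hsqK hN0
    have h2 := htel K
    have h3 : f (X 0) - f (X K) ≤ f (X 0) - flow := by linarith [hbdd (X K)]
    have h4 : (2 + Lstar) * ∑ k ∈ Finset.range K, ((k:ℝ)+1)⁻¹
        ≤ (2 + Lstar) * (1 + Real.log K) :=
      mul_le_mul_of_nonneg_left hharmle (by linarith)
    have h5 : N * Real.sqrt K
        ≤ f (X 0) - flow + (2 + Lstar) * (1 + Real.log K) := by
      rw [hharm] at h2
      linarith
    have h6 : f (X 0) - flow + (2 + Lstar) * (1 + Real.log K) ≤ Ugd * (2 + Real.log K) := by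
      rw [hUgd]
      nlinarith [hc0, hLnn, hlogK0]
    linarith
  have hnum := StmtAux.numeric_core (U := Ugd) (ε := ε) (Kr := (K:ℝ)) hU4 hε0 hε1.le hK
  have hsqKpos : 0 < Real.sqrt K := Real.sqrt_pos.2 (by exact_mod_cast Nat.pos_of_ne_zero (by omega))
  have := le_of_mul_le_mul_right (a := Real.sqrt K) (by linarith : N * Real.sqrt K ≤ ε * Real.sqrt K) hsqKpos
  exact this
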